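/- Fixed points of the IMF iteration are stationary points of F (part (3) of the convergence theorem, fixed-point direction): let E be a real Hilbert space, F : E → ℝ differentiable, φ̄ ∈ E, and v ∈ E with ‖v‖ = 1. Define L(φ) = F(φ) − 2 F(φ̄ + ⟨v, φ − φ̄⟩ · v). If ∇L(φ̄) = 0 (i.e. φ̄ is a critical point of its own auxiliary functional, as holds at any fixed point of the IMF mapping), then ∇F(φ̄) = 0. -/

import Mathlib

open RealInnerProductSpace

/-!
With `P h = ⟪v, h⟫ • v`, the chain rule gives `L'(φ̄) = F'(φ̄) - 2 F'(φ̄) ∘ P`, so a critical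
point of `L` has `F'(φ̄) h = 2 ⟪v, h⟫ F'(φ̄) v` for all `h`. Taking `h = v` and `‖v‖ = 1` gives
`F'(φ̄) v = 2 F'(φ̄) v`, hence `F'(φ̄) v = 0` and then `F'(φ̄) = 0`.
-/

section

variable {E : Type*} [NormedAddCommGroup E] [InnerProductSpace ℝ E]

theorem hasFDerivAt_add_inner_sub_smul (a v x : E) :
    HasFDerivAt (fun φ : E => a + ⟪v, φ - a⟫ • v) ((innerSL ℝ v).smulRight v) x :=
  (((innerSL ℝ v).hasFDerivAt.comp x ((hasFDerivAt_id x).sub_const a)).smul_const v).const_add a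

theorem ContinuousLinearMap.eq_zero_of_eq_smul_comp_smulRight_innerSL {G : StrongDual ℝ E}
    {v : E} {c : ℝ} (hc : c * ‖v‖ ^ 2 ≠ 1)
    (hG : G = c • G.comp ((innerSL ℝ v).smulRight v)) : G = 0 := by
  have hG_apply (h : E) : G h = c * ⟪v, h⟫ * G v := by
    simpa [mul_assoc] using congr($hG h)
  have hGv : G v = 0 := by
    have hv := hG_apply v
    rw [real_inner_self_eq_norm_sq] at hv
    have : (1 - c * ‖v‖ ^ 2) * G v = 0 := by linarith
    exact (mul_eq_zero.mp this).resolve_left (sub_ne_zero.mpr hc.symm)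
  ext h
  simp [hG_apply h, hGv]

theorem gradient_eq_zero_iff [CompleteSpace E] {f : E → ℝ} {x : E} :
    gradient f x = 0 ↔ fderiv ℝ f x = 0 := by
  rw [← toDual_gradient, LinearIsometryEquiv.map_eq_zero_iff]

end

/-- Fixed points of the IMF iteration are stationary points of `F` (part (3) of the
convergence theorem, fixed-point direction): let `E` be a real Hilbert space,
`F : E → ℝ` differentiable, `‖v‖ = 1`, and
`L(φ) = F(φ) − 2 F(φ̄ + ⟨v, φ − φ̄⟩ • v)`. If `∇L(φ̄) = 0`, then `∇F(φ̄) = 0`. -/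
theorem imf_fixed_point_is_stationary {E : Type*} [NormedAddCommGroup E]
    [InnerProductSpace ℝ E] [CompleteSpace E]
    (F : E → ℝ) (hF : Differentiable ℝ F)
    (φbar v : E) (hv : ‖v‖ = 1)
    (hL : gradient (fun φ : E => F φ - 2 * F (φbar + ⟪v, φ - φbar⟫ • v)) φbar = 0) :
    gradient F φbar = 0 := by
  have hF' : HasFDerivAt F (fderiv ℝ F φbar) φbar := (hF φbar).hasFDerivAt
  have hFP : HasFDerivAt (fun φ : E => F (φbar + ⟪v, φ - φbar⟫ • v))
      ((fderiv ℝ F φbar).comp ((innerSL ℝ v).smulRight v)) φbar :=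
    HasFDerivAt.comp φbar (by simpa using hF') (hasFDerivAt_add_inner_sub_smul φbar v φbar)
  rw [gradient_eq_zero_iff, (hF'.fun_sub (hFP.const_mul 2)).fderiv, sub_eq_zero] at hL
  rw [gradient_eq_zero_iff]
  exact ContinuousLinearMap.eq_zero_of_eq_smul_comp_smulRight_innerSL (by norm_num [hv]) hL
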